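/- Let H be an Nt × Nr complex matrix admitting a decomposition H = U · diag(μ) · Vᴴ, where V is an Nr × Nr unitary matrix, U is an Nt × Nr complex matrix whose columns each have Euclidean norm 1, and μ : Fin Nr → ℝ with μᵢ ≥ 0 for all i. Suppose Ns ≤ Np ≤ Nr and Ep > 0. Then there exist a real number α > 0 and an Nr × Np complex matrix P with Tr(P Pᴴ) ≤ Ep (entrywise real part of the trace at most Ep) such that for every i ∈ Fin Np the i-th column of H·P equals α·μᵢ times the i-th column of U; consequently, for every i with μᵢ > 0, the i-th column of U equals the i-th column of H·P divided by its Euclidean norm, and μᵢ equals that norm divided by α. -/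

import Mathlib

/-!
Take `P = α • V₁`, where `V₁` consists of the first `Np` columns of `V` and
`α = √(Ep / (Np + 1))`. Since `V` is unitary, `H * V = U * diag μ`, so the `i`-th column of
`H * P` is `α μᵢ uᵢ`; as `uᵢ` is a unit vector, its norm is `α μᵢ`, which gives back `μᵢ` and,
when `μᵢ > 0`, the direction `uᵢ`. The power is `Tr(P Pᴴ) = α² Tr(V₁ᴴ V₁) = α² Np < Ep`.
-/

open Matrix

/-- Euclidean norm of the `i`-th column of a matrix. -/
noncomputable def colNorm {m n : ℕ} (M : Matrix (Fin m) (Fin n) ℂ) (i : Fin n) : ℝ :=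
  Real.sqrt (∑ j, Complex.normSq (M j i))

section Unitary

variable {m n : Type*} [Fintype m] [DecidableEq m] [Fintype n] [DecidableEq n]
  {R : Type*} [CommRing R] [StarRing R]

theorem mul_eq_of_eq_mul_diagonal_mul_conjTranspose {l : Type*} {H U : Matrix l m R}
    {V : Matrix m m R} (hV : V ∈ unitaryGroup m R) {d : m → R}
    (hH : H = U * diagonal d * Vᴴ) : H * V = U * diagonal d := by
  rw [hH, Matrix.mul_assoc, ← star_eq_conjTranspose, mem_unitaryGroup_iff'.mp hV,
    Matrix.mul_one]

theorem trace_submatrix_mul_conjTranspose_of_mem_unitaryGroup {V : Matrix m m R}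
    (hV : V ∈ unitaryGroup m R) {e : n → m} (he : Function.Injective e) :
    (V.submatrix id e * (V.submatrix id e)ᴴ).trace = Fintype.card n := by
  rw [trace_mul_comm, conjTranspose_submatrix,
    ← submatrix_mul _ _ _ _ _ Function.bijective_id, ← star_eq_conjTranspose,
    mem_unitaryGroup_iff'.mp hV, submatrix_one _ he, trace_one]

end Unitary

section ColNorm

variable {m n n' : ℕ}

theorem colNorm_eq_of_col_eq_smul {M : Matrix (Fin m) (Fin n) ℂ}
    {N : Matrix (Fin m) (Fin n') ℂ} {i : Fin n} {k : Fin n'} {c : ℝ} (hc : 0 ≤ c)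
    (h : ∀ j, M j i = c * N j k) : colNorm M i = c * colNorm N k := by
  have hsq : ∑ j, Complex.normSq (M j i) = c ^ 2 * ∑ j, Complex.normSq (N j k) := by
    rw [Finset.mul_sum]
    refine Finset.sum_congr rfl fun j _ => ?_
    rw [h j, Complex.normSq_mul, Complex.normSq_ofReal, sq]
  rw [colNorm, colNorm, hsq, Real.sqrt_mul (sq_nonneg c), Real.sqrt_sq hc]

theorem col_eq_div_colNorm_of_col_eq_smul {M : Matrix (Fin m) (Fin n) ℂ}
    {N : Matrix (Fin m) (Fin n') ℂ} {i : Fin n} {k : Fin n'} {c : ℝ} (hc : 0 < c)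
    (h : ∀ j, M j i = c * N j k) (hN : colNorm N k = 1) :
    colNorm M i = c ∧ ∀ j, N j k = M j i / colNorm M i := by
  have hnorm : colNorm M i = c := by
    rw [colNorm_eq_of_col_eq_smul hc.le h, hN, mul_one]
  refine ⟨hnorm, fun j => ?_⟩
  rw [h j, hnorm, mul_div_cancel_left₀ _ (Complex.ofReal_ne_zero.mpr hc.ne')]

end ColNorm

theorem prop1_general (Nt Nr Np : ℕ) (hNp : Np ≤ Nr)
    (Ep : ℝ) (hEp : 0 < Ep)
    (H U : Matrix (Fin Nt) (Fin Nr) ℂ)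
    (V : Matrix (Fin Nr) (Fin Nr) ℂ) (μ : Fin Nr → ℝ)
    (hV : V ∈ Matrix.unitaryGroup (Fin Nr) ℂ)
    (hU : ∀ i, colNorm U i = 1)
    (hH : H = U * Matrix.diagonal (fun i => (μ i : ℂ)) * Vᴴ) :
    ∃ (α : ℝ) (P : Matrix (Fin Nr) (Fin Np) ℂ), 0 < α ∧
      ((P * Pᴴ).trace).re ≤ Ep ∧
      (∀ i : Fin Np, ∀ j : Fin Nt,
        (H * P) j i = (α * μ (Fin.castLE hNp i) : ℂ) * U j (Fin.castLE hNp i)) ∧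
      (∀ i : Fin Np, 0 < μ (Fin.castLE hNp i) →
        (∀ j : Fin Nt,
          U j (Fin.castLE hNp i) = (H * P) j i / (colNorm (H * P) i : ℂ)) ∧
        μ (Fin.castLE hNp i) = colNorm (H * P) i / α) := by
  set e := Fin.castLE hNp
  set α := Real.sqrt (Ep / (Np + 1))
  have hα : 0 < α := Real.sqrt_pos.mpr (by positivity)
  set W := V.submatrix id e
  have hHP : ∀ i j, (H * ((α : ℂ) • W)) j i = (α * μ (e i) : ℂ) * U j (e i) := by
    intro i j
    have hHW : H * W = (H * V).submatrix id e :=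
      (submatrix_mul H V id id e Function.bijective_id).symm
    rw [Matrix.mul_smul, hHW, mul_eq_of_eq_mul_diagonal_mul_conjTranspose hV hH]
    simp only [Matrix.smul_apply, submatrix_apply, id_eq, mul_diagonal, smul_eq_mul]
    ring
  have htrace : (((α : ℂ) • W) * ((α : ℂ) • W)ᴴ).trace.re = α ^ 2 * Np := by
    rw [conjTranspose_smul, Matrix.smul_mul, Matrix.mul_smul, trace_smul, trace_smul,
      trace_submatrix_mul_conjTranspose_of_mem_unitaryGroup hV (Fin.castLE_injective hNp),
      RCLike.star_def, Complex.conj_ofReal, Fintype.card_fin, smul_eq_mul, smul_eq_mul,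
      ← Complex.ofReal_natCast, ← Complex.ofReal_mul, ← Complex.ofReal_mul, Complex.ofReal_re]
    ring
  refine ⟨α, (α : ℂ) • W, hα, ?_, hHP, fun i hμi => ?_⟩
  · rw [htrace, Real.sq_sqrt (by positivity), div_mul_eq_mul_div, div_le_iff₀ (by positivity)]
    nlinarith
  · obtain ⟨hnorm, hcol⟩ := col_eq_div_colNorm_of_col_eq_smul
      (M := H * ((α : ℂ) • W)) (mul_pos hα hμi)
      (fun j => by rw [hHP i j, Complex.ofReal_mul]) (hU (e i))
    exact ⟨hcol, by rw [hnorm, mul_div_cancel_left₀ _ hα.ne']⟩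

/-- Proposition 1: existence of a channel-adaptive pilot matrix `P` satisfying the
power constraint from which the left singular vectors and singular values of the
channel can be recovered from the noiseless feedback `H * P`. -/
theorem prop1 (Nt Nr Np Ns : ℕ) (hNs : Ns ≤ Np) (hNp : Np ≤ Nr)
    (Ep : ℝ) (hEp : 0 < Ep)
    (H U : Matrix (Fin Nt) (Fin Nr) ℂ)
    (V : Matrix (Fin Nr) (Fin Nr) ℂ) (μ : Fin Nr → ℝ)
    (hμ : ∀ i, 0 ≤ μ i)
    (hV : V ∈ Matrix.unitaryGroup (Fin Nr) ℂ)
    (hU : ∀ i, colNorm U i = 1)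
    (hH : H = U * Matrix.diagonal (fun i => (μ i : ℂ)) * Vᴴ) :
    ∃ (α : ℝ) (P : Matrix (Fin Nr) (Fin Np) ℂ), 0 < α ∧
      ((P * Pᴴ).trace).re ≤ Ep ∧
      (∀ i : Fin Np, ∀ j : Fin Nt,
        (H * P) j i = (α * μ (Fin.castLE hNp i) : ℂ) * U j (Fin.castLE hNp i)) ∧
      (∀ i : Fin Np, 0 < μ (Fin.castLE hNp i) →
        (∀ j : Fin Nt,
          U j (Fin.castLE hNp i) = (H * P) j i / (colNorm (H * P) i : ℂ)) ∧
        μ (Fin.castLE hNp i) = colNorm (H * P) i / α) :=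
  prop1_general Nt Nr Np hNp Ep hEp H U V μ hV hU hH
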